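/- Let A, B, D be unital C*-algebras, let T1, T2 : A → B be completely positive maps, and let S : D → A be a completely positive map. Then β(T1∘S, T2∘S) ≤ √‖S‖ · β(T1, T2), where ‖S‖ is the operator norm of S. -/

import Mathlib

noncomputable section

/-- A map between star algebras is *completely positive* if, for every `n`, its
entrywise application to `n × n` matrices maps positive elements (i.e. elements of the form
`star y * y`) to positive elements. -/
def IsCPMap {A B : Type*} [NonUnitalSemiring A] [StarRing A]
    [NonUnitalSemiring B] [StarRing B] (T : A → B) : Prop :=
  ∀ (n : ℕ) (x : Matrix (Fin n) (Fin n) A),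
    (∃ y : Matrix (Fin n) (Fin n) A, x = star y * y) →
      ∃ z : Matrix (Fin n) (Fin n) B, x.map T = star z * z

/-- `That : A → M₂(B)` is a cp extension of the pair `(T₁, T₂)`: it is completely positive
and its diagonal entries are `T₁` and `T₂`. -/
def IsCPExtension {A B : Type*} [CStarAlgebra A] [CStarAlgebra B]
    (T₁ T₂ : A → B) (That : A →ₗ[ℂ] Matrix (Fin 2) (Fin 2) B) : Prop :=
  IsCPMap That ∧ (∀ a : A, That a 0 0 = T₁ a) ∧ (∀ a : A, That a 1 1 = T₂ a)

/-- The Bures distance between two completely positive maps `T₁ T₂ : A → B`: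
`β(T₁,T₂) = √ inf { ‖T₁ 1 + T₂ 1 - T̂₁₂ 1 - T̂₂₁ 1‖ | T̂ a cp extension of (T₁, T₂) }`. -/
noncomputable def buresDist {A B : Type*} [CStarAlgebra A] [CStarAlgebra B]
    (T₁ T₂ : A → B) : ℝ :=
  Real.sqrt (sInf { r : ℝ | ∃ That : A →ₗ[ℂ] Matrix (Fin 2) (Fin 2) B,
    IsCPExtension T₁ T₂ That ∧ r = ‖T₁ 1 + T₂ 1 - That 1 0 1 - That 1 1 0‖ })


/-!
If `T̂` is a cp extension of `(T₁, T₂)`, then `T̂ ∘ S` is a cp extension of `(T₁ ∘ S, T₂ ∘ S)`,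
so it suffices to compare the quantities under the two infima. They are `Φ (S 1)` and `Φ 1` for
`Φ a = T̂₁₁ a + T̂₂₂ a - T̂₁₂ a - T̂₂₁ a = v* T̂(a) v`, `v = (1, -1)`, a positive map. As
`0 ≤ S 1 ≤ ‖S 1‖ • 1` and `‖S 1‖ ≤ ‖S‖`, positivity gives `‖Φ (S 1)‖ ≤ ‖S‖ ‖Φ 1‖`. The diagonal
extension `diag(T₁, T₂)` keeps the right-hand infimum from being the junk value `sInf ∅ = 0`.
-/

open Matrix

theorem IsCPMap.comp {A B D : Type*} [NonUnitalSemiring A] [StarRing A]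
    [NonUnitalSemiring B] [StarRing B] [NonUnitalSemiring D] [StarRing D]
    {T : A → B} {S : D → A} (hT : IsCPMap T) (hS : IsCPMap S) :
    IsCPMap (fun d => T (S d)) := by
  intro n x hx
  obtain ⟨z, hz⟩ := hS n x hx
  exact hT n (x.map S) ⟨z, hz⟩

theorem IsCPMap.exists_apply_eq_star_mul_self {A B : Type*} [NonUnitalCStarAlgebra A]
    [PartialOrder A] [StarOrderedRing A] [NonUnitalSemiring B] [StarRing B]
    {T : A → B} (hT : IsCPMap T) {a : A} (ha : 0 ≤ a) : ∃ w : B, T a = star w * w := by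
  obtain ⟨y, rfl⟩ := CStarAlgebra.nonneg_iff_eq_star_mul_self.mp ha
  obtain ⟨z, hz⟩ := hT 1 (of fun _ _ => star y * y) ⟨of fun _ _ => y, by
    ext i j
    simp [mul_apply, star_apply]⟩
  refine ⟨z 0 0, ?_⟩
  simpa [mul_apply, star_apply] using congrFun₂ hz 0 0

theorem IsCPMap.map_nonneg {A B : Type*} [NonUnitalCStarAlgebra A] [PartialOrder A]
    [StarOrderedRing A] [NonUnitalSemiring B] [PartialOrder B] [StarRing B] [StarOrderedRing B]
    {T : A → B} (hT : IsCPMap T) {a : A} (ha : 0 ≤ a) : 0 ≤ T a := by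
  obtain ⟨w, hw⟩ := hT.exists_apply_eq_star_mul_self ha
  exact hw ▸ star_mul_self_nonneg w

theorem IsCPMap.diagonal {ι A B : Type*} [Fintype ι] [DecidableEq ι]
    [NonUnitalSemiring A] [StarRing A] [NonUnitalSemiring B] [StarRing B]
    {T : ι → A → B} (hT : ∀ i, IsCPMap (T i)) :
    IsCPMap (fun a => Matrix.diagonal fun i => T i a) := by
  intro n x hx
  choose z hz using fun i => hT i n x hx
  refine ⟨of fun k l => Matrix.diagonal fun i => z i k l, ?_⟩
  ext k l p q
  have hzpkl := congrFun₂ (hz p) k l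
  simp only [map_apply, mul_apply, star_apply] at hzpkl
  by_cases hpq : p = q
  · subst hpq
    simp [mul_apply, Matrix.sum_apply, star_eq_conjTranspose, hzpkl]
  · simp [mul_apply, Matrix.sum_apply, star_eq_conjTranspose, diagonal_apply_ne _ hpq]

/-- `m ↦ v* m v` for `v = (1, -1)`. -/
def sumDiagSubOffDiag (R B : Type*) [CommSemiring R] [AddCommGroup B] [Module R B] :
    Matrix (Fin 2) (Fin 2) B →ₗ[R] B :=
  entryLinearMap R B 0 0 + entryLinearMap R B 1 1 - entryLinearMap R B 0 1 -
    entryLinearMap R B 1 0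

theorem sumDiagSubOffDiag_apply {R B : Type*} [CommSemiring R] [AddCommGroup B] [Module R B]
    (m : Matrix (Fin 2) (Fin 2) B) :
    sumDiagSubOffDiag R B m = m 0 0 + m 1 1 - m 0 1 - m 1 0 :=
  rfl

theorem sumDiagSubOffDiag_star_mul_self (R : Type*) {B : Type*} [CommSemiring R] [Ring B]
    [StarRing B] [Module R B] (w : Matrix (Fin 2) (Fin 2) B) :
    sumDiagSubOffDiag R B (star w * w) =
      star (w 0 0 - w 0 1) * (w 0 0 - w 0 1) + star (w 1 0 - w 1 1) * (w 1 0 - w 1 1) := by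
  simp only [sumDiagSubOffDiag_apply, mul_apply, star_apply, Fin.sum_univ_two, star_sub,
    sub_mul, mul_sub]
  abel

theorem sumDiagSubOffDiag_star_mul_self_nonneg (R : Type*) {B : Type*} [CommSemiring R] [Ring B]
    [PartialOrder B] [StarRing B] [StarOrderedRing B] [Module R B]
    (w : Matrix (Fin 2) (Fin 2) B) : 0 ≤ sumDiagSubOffDiag R B (star w * w) := by
  rw [sumDiagSubOffDiag_star_mul_self]
  exact add_nonneg (star_mul_self_nonneg _) (star_mul_self_nonneg _)

section CPExtension

variable {A B D : Type*} [CStarAlgebra A] [CStarAlgebra B] [CStarAlgebra D]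

def diagonalCPExtension (T₁ T₂ : A →ₗ[ℂ] B) : A →ₗ[ℂ] Matrix (Fin 2) (Fin 2) B :=
  diagonalLinearMap (Fin 2) ℂ B ∘ₗ LinearMap.pi ![T₁, T₂]

theorem isCPExtension_diagonalCPExtension {T₁ T₂ : A →ₗ[ℂ] B} (hT₁ : IsCPMap T₁)
    (hT₂ : IsCPMap T₂) : IsCPExtension T₁ T₂ (diagonalCPExtension T₁ T₂) :=
  ⟨IsCPMap.diagonal (T := fun i => ⇑(![T₁, T₂] i)) (Fin.forall_fin_two.mpr ⟨hT₁, hT₂⟩),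
    fun _ => rfl, fun _ => rfl⟩

theorem IsCPExtension.comp {T₁ T₂ : A → B} {That : A →ₗ[ℂ] Matrix (Fin 2) (Fin 2) B}
    (hThat : IsCPExtension T₁ T₂ That) {S : D →ₗ[ℂ] A} (hS : IsCPMap S) :
    IsCPExtension (fun d => T₁ (S d)) (fun d => T₂ (S d)) (That ∘ₗ S) :=
  ⟨hThat.1.comp hS, fun d => hThat.2.1 (S d), fun d => hThat.2.2 (S d)⟩

theorem IsCPExtension.sumDiagSubOffDiag_apply {T₁ T₂ : A → B}
    {That : A →ₗ[ℂ] Matrix (Fin 2) (Fin 2) B} (hThat : IsCPExtension T₁ T₂ That) (a : A) :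
    sumDiagSubOffDiag ℂ B (That a) = T₁ a + T₂ a - That a 0 1 - That a 1 0 := by
  rw [_root_.sumDiagSubOffDiag_apply, hThat.2.1, hThat.2.2]

theorem ContinuousLinearMap.norm_apply_one_le {E : Type*} [SeminormedAddCommGroup E]
    [NormedSpace ℂ E] (S : D →L[ℂ] E) : ‖S 1‖ ≤ ‖S‖ := by
  rcases subsingleton_or_nontrivial D with hD | hD
  · simp [Subsingleton.elim (1 : D) 0]
  · simpa using S.le_opNorm 1

variable [PartialOrder A] [StarOrderedRing A] [PartialOrder B] [StarOrderedRing B]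
  [PartialOrder D] [StarOrderedRing D]

theorem IsCPMap.sumDiagSubOffDiag_nonneg {That : A → Matrix (Fin 2) (Fin 2) B}
    (hThat : IsCPMap That) {a : A} (ha : 0 ≤ a) : 0 ≤ sumDiagSubOffDiag ℂ B (That a) := by
  obtain ⟨w, hw⟩ := hThat.exists_apply_eq_star_mul_self ha
  exact hw ▸ sumDiagSubOffDiag_star_mul_self_nonneg ℂ w

theorem IsCPExtension.norm_comp_le {T₁ T₂ : A → B} {That : A →ₗ[ℂ] Matrix (Fin 2) (Fin 2) B}
    (hThat : IsCPExtension T₁ T₂ That) {S : D →L[ℂ] A} (hS : IsCPMap S) :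
    ‖T₁ (S 1) + T₂ (S 1) - That (S 1) 0 1 - That (S 1) 1 0‖ ≤
      ‖S‖ * ‖T₁ 1 + T₂ 1 - That 1 0 1 - That 1 1 0‖ := by
  let Φ : A →ₚ[ℂ] B :=
    .mk₀ (sumDiagSubOffDiag ℂ B ∘ₗ That) fun _ ↦ hThat.1.sumDiagSubOffDiag_nonneg
  have hΦ (a : A) : Φ a = T₁ a + T₂ a - That a 0 1 - That a 1 0 :=
    hThat.sumDiagSubOffDiag_apply a
  rw [← hΦ, ← hΦ, mul_comm]
  calc ‖Φ (S 1)‖ ≤ ‖Φ 1‖ * ‖S 1‖ := Φ.norm_apply_le_of_nonneg _ (hS.map_nonneg zero_le_one)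
    _ ≤ ‖Φ 1‖ * ‖S‖ := by gcongr; exact S.norm_apply_one_le

end CPExtension

theorem Real.sInf_le_mul_sInf_of_forall_exists_le {I J : Set ℝ} (hI : I.Nonempty)
    (hJ : BddBelow J) {c : ℝ} (hc : 0 ≤ c) (h : ∀ r ∈ I, ∃ s ∈ J, s ≤ c * r) :
    sInf J ≤ c * sInf I := by
  rw [← smul_eq_mul, ← Real.sInf_smul_of_nonneg hc]
  refine le_csInf hI.smul_set ?_
  rintro _ ⟨r, hr, rfl⟩
  obtain ⟨s, hs, hsr⟩ := h r hr
  exact (csInf_le hJ hs).trans hsr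

-- the order of a C⋆-algebra in which `0 ≤ a ↔ ∃ y, a = star y * y`
attribute [local instance] CStarAlgebra.spectralOrder CStarAlgebra.spectralOrderedRing

theorem stmt9 {A B D : Type*} [CStarAlgebra A] [CStarAlgebra B] [CStarAlgebra D]
    (T₁ T₂ : A →L[ℂ] B) (hT₁ : IsCPMap T₁) (hT₂ : IsCPMap T₂)
    (S : D →L[ℂ] A) (hS : IsCPMap S) :
    buresDist (fun d => T₁ (S d)) (fun d => T₂ (S d)) ≤
      Real.sqrt ‖S‖ * buresDist (⇑T₁) (⇑T₂) := by
  rw [buresDist, buresDist, ← Real.sqrt_mul (norm_nonneg S)]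
  refine Real.sqrt_le_sqrt (Real.sInf_le_mul_sInf_of_forall_exists_le ?_ ?_ (norm_nonneg S) ?_)
  · exact ⟨_, diagonalCPExtension T₁.toLinearMap T₂.toLinearMap,
      isCPExtension_diagonalCPExtension hT₁ hT₂, rfl⟩
  · exact ⟨0, by rintro _ ⟨_, _, rfl⟩; exact norm_nonneg _⟩
  · rintro _ ⟨That, hThat, rfl⟩
    exact ⟨_, ⟨That ∘ₗ S.toLinearMap, hThat.comp hS, rfl⟩, hThat.norm_comp_le hS⟩
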